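/- For every w ∈ H_h one has ((I + (h²/4)Λ)w, w)_h ≥ cos²(π(N−1)/(2N)) ‖w‖_h², and the constant cos²(π(N−1)/(2N)) is sharp (it is attained for some nonzero w); in particular the quadratic form ((I + (h²/4)Λ)w, w)_h is positive definite on H_h, but its smallest eigenvalue is of order O(1/N²) and hence is not bounded below by a positive constant uniformly in h. -/

import Mathlib

open Real



private lemma sum_Icc_shift (f : ℕ → ℝ) (a b : ℕ) :
    ∑ k ∈ Finset.Icc (a+1) (b+1), f k = ∑ k ∈ Finset.Icc a b, f (k+1) := by
  rw [← Finset.map_add_right_Icc, Finset.sum_map]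
  rfl

private lemma Spos (N : ℕ) (hN : 2 ≤ N) (k : ℕ) (h1 : 1 ≤ k) (h2 : k ≤ N - 1) :
    0 < Real.sin (k * π / N) := by
  apply Real.sin_pos_of_pos_of_lt_pi
  · have : (0:ℝ) < k := by exact_mod_cast h1
    have : (0:ℝ) < N := by positivity
    positivity
  · have hk : (k:ℝ) < N := by exact_mod_cast (by omega : k < N)
    have hNpos : (0:ℝ) < N := by positivity
    rw [div_lt_iff₀ hNpos]
    nlinarith [Real.pi_pos]

private lemma Srec (N : ℕ) (j : ℕ) :
    Real.sin ((j+2) * π / N) + Real.sin (j * π / N)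
      = 2 * Real.cos (π / N) * Real.sin ((j+1) * π / N) := by
  have e1 : ((j:ℝ)+2) * π / N = (j+1) * π / N + π / N := by ring
  have e2 : (j:ℝ) * π / N = (j+1) * π / N - π / N := by ring
  rw [e1, e2, Real.sin_add, Real.sin_sub]
  ring

private lemma bracket (N : ℕ) (hN : 2 ≤ N) (w : ℕ → ℝ) :
    ∑ k ∈ Finset.Icc 1 (N-2),
        (Real.sin ((k+1) * π / N) / Real.sin (k * π / N) * w k ^ 2
          + Real.sin (k * π / N) / Real.sin ((k+1) * π / N) * w (k+1) ^ 2)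
      = 2 * Real.cos (π / N) * ∑ k ∈ Finset.Icc 1 (N-1), w k ^ 2 := by
  have hb : N - 1 = (N - 2) + 1 := by omega
  have hNne : (N:ℝ) ≠ 0 := by positivity
  set A : ℕ → ℝ := fun k => Real.sin ((k+1) * π / N) / Real.sin (k * π / N) * w k ^ 2 with hA
  set B : ℕ → ℝ := fun k => Real.sin ((k-1:ℕ) * π / N) / Real.sin (k * π / N) * w k ^ 2 with hB
  have hsplit : ∑ k ∈ Finset.Icc 1 (N-2),
      (Real.sin ((k+1) * π / N) / Real.sin (k * π / N) * w k ^ 2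
        + Real.sin (k * π / N) / Real.sin ((k+1) * π / N) * w (k+1) ^ 2)
      = ∑ k ∈ Finset.Icc 1 (N-2), A k + ∑ k ∈ Finset.Icc 1 (N-2), B (k+1) := by
    rw [← Finset.sum_add_distrib]
    apply Finset.sum_congr rfl
    intro k _
    simp only [hA, hB, Nat.add_sub_cancel]
    push_cast
    ring
  rw [hsplit]
  -- first sum: extend to Icc 1 (N-1)
  have hAtop : A (N-1) = 0 := by
    have : ((N-1:ℕ):ℝ) + 1 = N := by
      have : ((N-1:ℕ):ℝ) = (N:ℝ) - 1 := by
        push_cast [Nat.cast_sub (by omega : 1 ≤ N)]; ring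
      rw [this]; ring
    simp only [hA]
    rw [show (((N-1:ℕ):ℝ)+1) * π / N = π by
      rw [this, mul_comm, mul_div_assoc, div_self hNne, mul_one]]
    rw [Real.sin_pi, zero_div, zero_mul]
  have hAsum : ∑ k ∈ Finset.Icc 1 (N-2), A k = ∑ k ∈ Finset.Icc 1 (N-1), A k := by
    rw [hb, Finset.sum_Icc_succ_top (by omega), ← hb, hAtop, add_zero]
  -- second sum: shift then extend
  have hBshift : ∑ k ∈ Finset.Icc 1 (N-2), B (k+1) = ∑ k ∈ Finset.Icc 2 (N-1), B k := by
    rw [hb, show (2:ℕ) = 1 + 1 from rfl, sum_Icc_shift]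
  have hB1 : B 1 = 0 := by
    simp only [hB]
    norm_num
  have hBsum : ∑ k ∈ Finset.Icc 2 (N-1), B k = ∑ k ∈ Finset.Icc 1 (N-1), B k := by
    have hins : Finset.Icc 1 (N-1) = insert 1 (Finset.Icc 2 (N-1)) := by
      ext x; simp only [Finset.mem_Icc, Finset.mem_insert]; omega
    rw [hins, Finset.sum_insert (by simp), hB1, zero_add]
  rw [hAsum, hBshift, hBsum, ← Finset.sum_add_distrib, Finset.mul_sum]
  apply Finset.sum_congr rfl
  intro k hk
  simp only [Finset.mem_Icc] at hk
  obtain ⟨j, rfl⟩ : ∃ j, k = j + 1 := ⟨k - 1, by omega⟩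
  have hpos := Spos N hN (j+1) (by omega) hk.2
  have hrec := Srec N j
  simp only [hA, hB, Nat.add_sub_cancel]
  have hne : Real.sin ((j+1) * π / N) ≠ 0 := ne_of_gt (by exact_mod_cast hpos)
  push_cast
  push_cast at hne hrec
  rw [show ((j:ℝ)+1+1) * π / (N:ℝ) = ((j:ℝ)+2) * π / N by ring]
  rw [div_mul_eq_mul_div, div_mul_eq_mul_div, ← add_div, div_eq_iff hne]
  linear_combination (w (j+1)) ^ 2 * hrec

private lemma Pineq (N : ℕ) (hN : 2 ≤ N) (w : ℕ → ℝ) :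
    -Real.cos (π / N) * ∑ k ∈ Finset.Icc 1 (N-1), w k ^ 2
      ≤ ∑ k ∈ Finset.Icc 1 (N-2), w k * w (k+1) := by
  have hb := bracket N hN w
  have hnn : 0 ≤ ∑ k ∈ Finset.Icc 1 (N-2),
      (w k * w (k+1) + (1/2) *
        (Real.sin ((k+1) * π / N) / Real.sin (k * π / N) * w k ^ 2
          + Real.sin (k * π / N) / Real.sin ((k+1) * π / N) * w (k+1) ^ 2)) := by
    apply Finset.sum_nonneg
    intro k hk
    simp only [Finset.mem_Icc] at hk
    have ha : 0 < Real.sin ((k+1) * π / N) := by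
      have := Spos N hN (k+1) (by omega) (by omega)
      push_cast at this ⊢; exact this
    have hbpos : 0 < Real.sin (k * π / N) := Spos N hN k hk.1 (by omega)
    have heq : w k * w (k+1) + (1/2) *
        (Real.sin ((k+1) * π / N) / Real.sin (k * π / N) * w k ^ 2
          + Real.sin (k * π / N) / Real.sin ((k+1) * π / N) * w (k+1) ^ 2)
        = (Real.sin ((k+1) * π / N) * w k + Real.sin (k * π / N) * w (k+1)) ^ 2
            / (2 * (Real.sin (k * π / N) * Real.sin ((k+1) * π / N))) := by
      field_simp
      ring
    rw [heq]
    positivity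
  have hsplit : ∑ k ∈ Finset.Icc 1 (N-2),
      (w k * w (k+1) + (1/2) *
        (Real.sin ((k+1) * π / N) / Real.sin (k * π / N) * w k ^ 2
          + Real.sin (k * π / N) / Real.sin ((k+1) * π / N) * w (k+1) ^ 2))
      = ∑ k ∈ Finset.Icc 1 (N-2), w k * w (k+1)
        + (1/2) * (2 * Real.cos (π / N) * ∑ k ∈ Finset.Icc 1 (N-1), w k ^ 2) := by
    rw [Finset.sum_add_distrib, ← Finset.mul_sum, hb]
  rw [hsplit] at hnn
  linarith

private lemma Peq (N : ℕ) (hN : 2 ≤ N) :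
    ∑ k ∈ Finset.Icc 1 (N-2), Real.sin (k * π / N) * Real.sin ((k+1) * π / N)
      = Real.cos (π / N) * ∑ k ∈ Finset.Icc 1 (N-1), Real.sin (k * π / N) ^ 2 := by
  have hb := bracket N hN (fun k => Real.sin (k * π / N))
  have hterm : ∀ k ∈ Finset.Icc 1 (N-2),
      Real.sin ((k+1) * π / N) / Real.sin (k * π / N) * Real.sin (k * π / N) ^ 2
        + Real.sin (k * π / N) / Real.sin ((k+1) * π / N) * Real.sin ((k+1) * π / N) ^ 2
      = 2 * (Real.sin (k * π / N) * Real.sin ((k+1) * π / N)) := by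
    intro k hk
    simp only [Finset.mem_Icc] at hk
    have ha : 0 < Real.sin ((k+1) * π / N) := by
      have := Spos N hN (k+1) (by omega) (by omega)
      push_cast at this ⊢; exact this
    have hbpos : 0 < Real.sin (k * π / N) := Spos N hN k hk.1 (by omega)
    field_simp
    ring
  push_cast at hb
  rw [Finset.sum_congr rfl hterm, ← Finset.mul_sum] at hb
  linarith

private lemma constEq (N : ℕ) (hN : 2 ≤ N) :
    Real.cos (π * ((N-1:ℕ):ℝ) / (2 * N)) ^ 2 = (1 - Real.cos (π / N)) / 2 := by
  have hNne : (N:ℝ) ≠ 0 := by positivity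
  have hc : ((N-1:ℕ):ℝ) = (N:ℝ) - 1 := by
    push_cast [Nat.cast_sub (by omega : 1 ≤ N)]; ring
  have harg : π * ((N-1:ℕ):ℝ) / (2 * N) = π / 2 - π / (2 * N) := by
    rw [hc]; field_simp
  rw [harg, Real.cos_pi_div_two_sub]
  have h2 := Real.cos_two_mul' (π / (2 * N))
  have h4 := Real.sin_sq_add_cos_sq (π / (2 * N))
  have h3 : (2:ℝ) * (π / (2 * N)) = π / N := by field_simp
  rw [h3] at h2
  linarith

private lemma sinEq (N : ℕ) (hN : 2 ≤ N) :
    Real.cos (π * ((N-1:ℕ):ℝ) / (2 * N)) = Real.sin (π / (2 * N)) := by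
  have hNne : (N:ℝ) ≠ 0 := by positivity
  have hc : ((N-1:ℕ):ℝ) = (N:ℝ) - 1 := by
    push_cast [Nat.cast_sub (by omega : 1 ≤ N)]; ring
  have harg : π * ((N-1:ℕ):ℝ) / (2 * N) = π / 2 - π / (2 * N) := by
    rw [hc]; field_simp
  rw [harg, Real.cos_pi_div_two_sub]

private lemma Sstmt (N : ℕ) (hN : 2 ≤ N) (h : ℝ) (hh : h ≠ 0) (w : ℕ → ℝ)
    (h0 : w 0 = 0) (hNw : w N = 0) :
    ∑ k ∈ Finset.Icc 1 (N-1),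
        (w k + (h^2/4) * ((w (k+1) - 2 * w k + w (k-1)) / h^2)) * w k
      = (1/2) * ∑ k ∈ Finset.Icc 1 (N-1), w k * w k
        + (1/2) * ∑ k ∈ Finset.Icc 1 (N-2), w k * w (k+1) := by
  have hb : N - 1 = (N - 2) + 1 := by omega
  have hterm : ∀ k ∈ Finset.Icc 1 (N-1),
      (w k + (h^2/4) * ((w (k+1) - 2 * w k + w (k-1)) / h^2)) * w k
        = w k * w k / 2 + (w (k+1) * w k) / 4 + (w (k-1) * w k) / 4 := by
    intro k _
    field_simp
    ring
  rw [Finset.sum_congr rfl hterm, Finset.sum_add_distrib, Finset.sum_add_distrib]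
  have h1 : ∑ k ∈ Finset.Icc 1 (N-1), w (k+1) * w k / 4
      = (1/4) * ∑ k ∈ Finset.Icc 1 (N-2), w k * w (k+1) := by
    rw [hb, Finset.sum_Icc_succ_top (by omega), ← hb]
    have hz : w (N - 1 + 1) = 0 := by
      rw [show N - 1 + 1 = N by omega, hNw]
    rw [hz, zero_mul, zero_div, add_zero, Finset.mul_sum]
    apply Finset.sum_congr rfl
    intro k _
    ring
  have h2 : ∑ k ∈ Finset.Icc 1 (N-1), w (k-1) * w k / 4
      = (1/4) * ∑ k ∈ Finset.Icc 1 (N-2), w k * w (k+1) := by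
    have hins : Finset.Icc 1 (N-1) = insert 1 (Finset.Icc 2 (N-1)) := by
      ext x; simp only [Finset.mem_Icc, Finset.mem_insert]; omega
    rw [hins, Finset.sum_insert (by simp)]
    norm_num [h0]
    have hsh := sum_Icc_shift (fun k => w (k-1) * w k / 4) 1 (N-2)
    rw [show (1:ℕ)+1 = 2 from rfl, ← hb] at hsh
    rw [hsh, Finset.mul_sum]
    apply Finset.sum_congr rfl
    intro k _
    simp only [Nat.add_sub_cancel]
    ring
  have h3 : ∑ k ∈ Finset.Icc 1 (N-1), w k * w k / 2
      = (1/2) * ∑ k ∈ Finset.Icc 1 (N-1), w k * w k := by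
    rw [Finset.mul_sum]
    apply Finset.sum_congr rfl
    intro k _
    ring
  rw [h1, h2, h3]
  ring

/-- for all w ∈ H_h one has ((I + (h²/4)Λ)w, w)_h ≥ cos²(π(N−1)/(2N))‖w‖_h²,
the constant cos²(π(N−1)/(2N)) is sharp (attained at a nonzero w), the quadratic form is
positive definite on H_h, and the sharp constant is of order O(1/N²): it is bounded by
(π/(2N))², hence not bounded below by a positive constant uniformly in h. -/
theorem stmt_19 (X : ℝ) (hX : 0 < X) (N : ℕ) (hN : 2 ≤ N) (h : ℝ) (hh : h = X / N) :
    (∀ w : ℕ → ℝ, w 0 = 0 → w N = 0 →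
      Real.cos (π * (N-1 : ℕ) / (2 * N))^2 * (h * ∑ k ∈ Finset.Icc 1 (N-1), w k * w k)
        ≤ h * ∑ k ∈ Finset.Icc 1 (N-1),
            (w k + (h^2/4) * ((w (k+1) - 2 * w k + w (k-1)) / h^2)) * w k) ∧
    (∃ w : ℕ → ℝ, w 0 = 0 ∧ w N = 0 ∧ (∃ k ∈ Finset.Icc 1 (N-1), w k ≠ 0) ∧
      Real.cos (π * (N-1 : ℕ) / (2 * N))^2 * (h * ∑ k ∈ Finset.Icc 1 (N-1), w k * w k)
        = h * ∑ k ∈ Finset.Icc 1 (N-1),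
            (w k + (h^2/4) * ((w (k+1) - 2 * w k + w (k-1)) / h^2)) * w k) ∧
    (∀ w : ℕ → ℝ, w 0 = 0 → w N = 0 → (∃ k ∈ Finset.Icc 1 (N-1), w k ≠ 0) →
      0 < h * ∑ k ∈ Finset.Icc 1 (N-1),
            (w k + (h^2/4) * ((w (k+1) - 2 * w k + w (k-1)) / h^2)) * w k) ∧
    Real.cos (π * (N-1 : ℕ) / (2 * N))^2 ≤ (π / (2 * N))^2 := by
  have hNpos : (0:ℝ) < N := by positivity
  have hNne : (N:ℝ) ≠ 0 := ne_of_gt hNpos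
  have hhpos : 0 < h := by rw [hh]; positivity
  have hhne : h ≠ 0 := ne_of_gt hhpos
  have hC := constEq N hN
  have hsin := sinEq N hN
  have hsinpos : 0 < Real.sin (π / (2 * N)) := by
    apply Real.sin_pos_of_pos_of_lt_pi
    · positivity
    · have hge : (2:ℝ) ≤ N := by exact_mod_cast hN
      have h2N : (1:ℝ) < 2 * N := by linarith
      calc π / (2 * (N:ℝ)) < π / 1 := by
            apply div_lt_div_of_pos_left Real.pi_pos (by norm_num) h2N
        _ = π := by norm_num
  have hCpos : 0 < Real.cos (π * ((N-1 : ℕ):ℝ) / (2 * N))^2 := by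
    rw [hsin]; positivity
  have part1 : ∀ w : ℕ → ℝ, w 0 = 0 → w N = 0 →
      Real.cos (π * ((N-1 : ℕ):ℝ) / (2 * N))^2 * (h * ∑ k ∈ Finset.Icc 1 (N-1), w k * w k)
        ≤ h * ∑ k ∈ Finset.Icc 1 (N-1),
            (w k + (h^2/4) * ((w (k+1) - 2 * w k + w (k-1)) / h^2)) * w k := by
    intro w h0 hNw
    rw [Sstmt N hN h hhne w h0 hNw, hC]
    have hP := Pineq N hN w
    have hQ : ∑ k ∈ Finset.Icc 1 (N-1), w k ^ 2 = ∑ k ∈ Finset.Icc 1 (N-1), w k * w k := by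
      apply Finset.sum_congr rfl; intro k _; ring
    rw [hQ] at hP
    have hkey : 0 ≤ (∑ k ∈ Finset.Icc 1 (N-2), w k * w (k+1))
        + Real.cos (π / N) * ∑ k ∈ Finset.Icc 1 (N-1), w k * w k := by linarith
    nlinarith [mul_nonneg hhpos.le hkey]
  refine ⟨part1, ?_, ?_, ?_⟩
  · -- equality witness
    set w : ℕ → ℝ := fun k => (-1:ℝ)^k * Real.sin (k * π / N) with hw
    have h0 : w 0 = 0 := by simp [hw]
    have hNw : w N = 0 := by
      simp only [hw]
      rw [show (N:ℝ) * π / N = π by field_simp, Real.sin_pi, mul_zero]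
    have hQ : ∑ k ∈ Finset.Icc 1 (N-1), w k * w k
        = ∑ k ∈ Finset.Icc 1 (N-1), Real.sin (k * π / N) ^ 2 := by
      apply Finset.sum_congr rfl; intro k _
      simp only [hw]
      have h1 : ((-1:ℝ))^k * (-1)^k = 1 := by
        rw [← pow_add, ← two_mul, pow_mul]; norm_num
      linear_combination (Real.sin (k * π / N))^2 * h1
    have hPval : ∑ k ∈ Finset.Icc 1 (N-2), w k * w (k+1)
        = -(∑ k ∈ Finset.Icc 1 (N-2), Real.sin (k * π / N) * Real.sin ((k+1) * π / N)) := by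
      rw [← Finset.sum_neg_distrib]
      apply Finset.sum_congr rfl; intro k _
      simp only [hw]
      have h1 : ((-1:ℝ))^k * (-1)^k = 1 := by
        rw [← pow_add, ← two_mul, pow_mul]; norm_num
      rw [pow_succ]
      push_cast
      linear_combination (-(Real.sin (k * π / N) * Real.sin (((k:ℝ)+1) * π / N))) * h1
    refine ⟨w, h0, hNw, ⟨1, by simp only [Finset.mem_Icc]; omega, ?_⟩, ?_⟩
    · simp only [hw]
      have := Spos N hN 1 le_rfl (by omega)
      push_cast at this
      intro hcon
      nlinarith
    · rw [Sstmt N hN h hhne w h0 hNw, hC, hQ, hPval, Peq N hN]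
      ring
  · -- positivity
    intro w h0 hNw ⟨j, hj, hjne⟩
    have hle := part1 w h0 hNw
    have hQpos : 0 < ∑ k ∈ Finset.Icc 1 (N-1), w k * w k :=
      Finset.sum_pos' (fun i _ => mul_self_nonneg _) ⟨j, hj, mul_self_pos.mpr hjne⟩
    calc (0:ℝ) < Real.cos (π * ((N-1 : ℕ):ℝ) / (2 * N))^2
          * (h * ∑ k ∈ Finset.Icc 1 (N-1), w k * w k) := by positivity
      _ ≤ _ := hle
  · -- O(1/N²) bound
    rw [hsin]
    have hx : 0 < π / (2 * (N:ℝ)) := by positivity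
    exact pow_le_pow_left₀ hsinpos.le (Real.sin_lt hx).le 2
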